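/- arXiv:1103.4697 — 2 statements merged into one kernel-verified Lean document; each statement's English description precedes it below -/
import Mathlib

section
/- Let f ∈ ℂ[x,y] be a square-free polynomial and let h = gcd(f_x, f_y) ∈ ℂ[x,y] be a greatest common divisor of its partial derivatives. Then h does not vanish at any x-critical point of the curve C = V(f); that is, for every point p with f(p) = f_y(p) = 0 one has h(p) ≠ 0. -/
open Polynomial

noncomputable section

/-- The polynomial ring `ℂ[x][y]` (inner variable `x`, outer variable `y`),
    our model of the bivariate polynomial ring `ℂ[x,y]`. -/
abbrev CXY := Polynomial (Polynomial ℂ)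

/-- The partial derivative `∂f/∂y`. -/
noncomputable def dY (f : CXY) : CXY := derivative f

/-- The partial derivative `∂f/∂x`. -/
noncomputable def dX (f : CXY) : CXY := f.sum fun n a => C (derivative a) * X ^ n

/-- The univariate polynomial `f(α, y) ∈ ℂ[y]`. -/
noncomputable def fiber (f : CXY) (α : ℂ) : Polynomial ℂ := f.map (evalRingHom α)

/-- The value `f(α, β)`. -/
noncomputable def evalAt (α β : ℂ) (f : CXY) : ℂ := (fiber f α).eval β

/-- The ring `ℂ[x,y]` as a multivariate polynomial ring. -/
abbrev MvC := MvPolynomial (Fin 2) ℂ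

/-- The canonical identification `ℂ[x][y] → ℂ[x,y]`, `x ↦ X 0`, `y ↦ X 1`. -/
noncomputable def toMv : CXY →+* MvC :=
  Polynomial.eval₂RingHom (Polynomial.eval₂RingHom MvPolynomial.C (MvPolynomial.X 0))
    (MvPolynomial.X 1)

/-- The maximal ideal of `ℂ[x,y]` corresponding to the point `p ∈ ℂ²`. -/
noncomputable def maxIdeal (p : ℂ × ℂ) : Ideal MvC :=
  RingHom.ker (MvPolynomial.eval fun i => if i = 0 then p.1 else p.2)

instance maxIdeal_isMaximal (p : ℂ × ℂ) : (maxIdeal p).IsMaximal :=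
  RingHom.ker_isMaximal_of_surjective _ fun c => ⟨MvPolynomial.C c, by simp [maxIdeal]⟩

/-- The localization of the quotient ring `ℂ[x,y]/(f,g)` at (the maximal ideal of) `p`;
    equivalently, the quotient of the local ring of `ℂ[x,y]` at `p` by (the image of) `(f,g)`. -/
abbrev LocQuot (f g : CXY) (p : ℂ × ℂ) :=
  Localization.AtPrime (maxIdeal p) ⧸
    Ideal.span {algebraMap MvC (Localization.AtPrime (maxIdeal p)) (toMv f),
      algebraMap MvC (Localization.AtPrime (maxIdeal p)) (toMv g)}

/-- The intersection multiplicity `Int(f,g,p)`: the dimension, as a `ℂ`-vector space (a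
    cardinal in general), of the localization of `ℂ[x,y]/(f,g)` at `p`. -/
noncomputable def IntRank (f g : CXY) (p : ℂ × ℂ) : Cardinal := Module.rank ℂ (LocQuot f g p)

/-- The intersection multiplicity `Int(f,g,p)` as a natural number (the `finrank` of the
    localization of `ℂ[x,y]/(f,g)` at `p` as a `ℂ`-vector space). -/
noncomputable def IntMult (f g : CXY) (p : ℂ × ℂ) : ℕ := Module.finrank ℂ (LocQuot f g p)

/-- The Sylvester matrix of two univariate polynomials `f` and `g` over a commutative ring. -/
noncomputable def sylvester {R : Type*} [CommRing R] (f g : Polynomial R) :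
    Matrix (Fin (g.natDegree + f.natDegree)) (Fin (g.natDegree + f.natDegree)) R :=
  Matrix.of fun i j =>
    if (j : ℕ) < g.natDegree then
      (if (j : ℕ) ≤ (i : ℕ) then f.coeff ((i : ℕ) - (j : ℕ)) else 0)
    else
      (if (j : ℕ) - g.natDegree ≤ (i : ℕ) then g.coeff ((i : ℕ) - ((j : ℕ) - g.natDegree)) else 0)

/-- The resultant of two univariate polynomials, as the determinant of their Sylvester
    matrix.  For `f g : CXY = (ℂ[x])[y]` this is the resultant `res_y(f,g) ∈ ℂ[x]`
    with respect to `y`. -/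
noncomputable def resultant {R : Type*} [CommRing R] (f g : Polynomial R) : R :=
  (_root_.sylvester f g).det

/-!
Suppose `f(p) = h(p) = 0`. A prime factor `q` of `h` vanishes at `p` and divides both partials of
`f`, so `f` is constant along the curve `q = 0`: `q ∣ f - c` for some `c ∈ ℂ`, and `c = f(p) = 0`.
A prime cannot divide both of its own partials, so `q ∣ f, f_x, f_y` forces `q² ∣ f`, contradicting
squarefreeness.

If `q` has `y`-degree zero it is a line `x = α`, and `f_y(α, y) = 0` makes `f(α, y)` constant.
Otherwise `f` is algebraic over `ℂ[x]` modulo `q`, and the ideal of relations `M(x, T)` with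
`q ∣ M(x, f)` is stable under `∂/∂x`: from `q ∣ M(f)` and `q ∣ ∂_y M(f) = M'(f) f_y` we get
`q² ∣ M(f)`, so `q ∣ ∂_x M(f) = (∂_x M)(f) + M'(f) f_x`. In a relation of minimal `T`-degree with
leading coefficient `a`, the relation `a' M - a ∂_x M` has smaller degree, hence vanishes, so every
coefficient of `M` is a constant multiple of `a` (their Wronskians with `a` vanish). This leaves a
relation `N(f) ≡ 0 (mod q)` with `N ∈ ℂ[T]`, and one linear factor `f - c` of `N(f)` is divisible
by `q`.
-/

namespace Derivation

variable {R A : Type*} [CommSemiring R] [CommRing A] [Algebra R A] (D : Derivation R A A)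
  {q g : A}

theorem mul_self_dvd_of_dvd_of_dvd_apply (hq : Prime q) (hDq : ¬q ∣ D q) (hg : q ∣ g)
    (hDg : q ∣ D g) : q * q ∣ g := by
  obtain ⟨u, rfl⟩ := hg
  rw [D.leibniz, smul_eq_mul, smul_eq_mul] at hDg
  have hu : q ∣ u * D q := (dvd_add_right (dvd_mul_right q _)).mp hDg
  exact mul_dvd_mul_left q ((hq.dvd_or_dvd hu).resolve_right hDq)

theorem dvd_apply_of_mul_self_dvd (h : q * q ∣ g) : q ∣ D g := by
  obtain ⟨w, rfl⟩ := h
  simp only [D.leibniz, smul_eq_mul]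
  exact dvd_add (dvd_mul_of_dvd_left (dvd_mul_right q q) _)
    ((dvd_add (dvd_mul_right q _) (dvd_mul_right q _)).mul_left w)

end Derivation

namespace Polynomial

theorem exists_eq_C_mul_of_wronskian_eq_zero {K : Type*} [Field K] [CharZero K] {a b : K[X]}
    (ha : a ≠ 0) (h : wronskian a b = 0) : ∃ l : K, b = C l * a := by
  obtain ⟨a₁, b₁, c, hrel, rfl, rfl⟩ := UniqueFactorizationMonoid.exists_reduced_factors a ha b
  obtain ⟨hc, ha₁⟩ := mul_ne_zero_iff.mp ha
  have hw : c * c * wronskian a₁ b₁ = 0 := by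
    simp only [wronskian, derivative_mul] at h ⊢
    linear_combination h
  obtain ⟨ha₁', hb₁'⟩ :=
    hrel.isCoprime.wronskian_eq_zero_iff.mp ((mul_eq_zero.mp hw).resolve_left (mul_ne_zero hc hc))
  rw [eq_C_of_derivative_eq_zero ha₁'] at ha₁ ⊢
  rw [eq_C_of_derivative_eq_zero hb₁']
  refine ⟨b₁.coeff 0 / a₁.coeff 0, ?_⟩
  rw [mul_left_comm, ← C_mul, div_mul_cancel₀ _ (C_ne_zero.mp ha₁)]

theorem exists_eq_C_mul_map_C_of_wronskian_coeff_eq_zero {K : Type*} [Field K] [CharZero K]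
    {M : K[X][X]} (hM : M ≠ 0) (h : ∀ n, wronskian M.leadingCoeff (M.coeff n) = 0) :
    ∃ N : K[X], M = C M.leadingCoeff * N.map C := by
  choose l hl using fun n => exists_eq_C_mul_of_wronskian_eq_zero (leadingCoeff_ne_zero.2 hM) (h n)
  obtain ⟨M₁, hM₁⟩ : C M.leadingCoeff ∣ M :=
    (C_dvd_iff_dvd_coeff _ _).2 fun n => ⟨C (l n), by rw [hl n, mul_comm]⟩
  refine ⟨M₁.map constantCoeff, ?_⟩
  conv_lhs => rw [hM₁]
  congr 1
  ext1 n
  have hn : M₁.coeff n = C (l n) := by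
    apply mul_left_cancel₀ (leadingCoeff_ne_zero.2 hM)
    rw [← coeff_C_mul, ← hM₁, hl n, mul_comm]
  simp [coeff_map, hn]

theorem not_dvd_C_of_natDegree_pos {R : Type*} [CommRing R] [IsDomain R] {q : R[X]}
    (hq : 0 < q.natDegree) {a : R} (ha : a ≠ 0) : ¬q ∣ C a := fun h => by
  have := natDegree_le_of_dvd h (C_ne_zero.mpr ha)
  rw [natDegree_C] at this
  omega

theorem exists_ne_zero_dvd_comp {R : Type*} [CommRing R] [IsDomain R] {q : R[X]} (hq : q ≠ 0)
    (f : R[X]) : ∃ M : R[X], M ≠ 0 ∧ q ∣ M.comp f := by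
  have halg : (Algebra.adjoin R {AdjoinRoot.root q}).IsAlgebraic :=
    Algebra.isAlgebraic_adjoin_singleton_iff.mpr (AdjoinRoot.isAlgebraic_root hq)
  rw [AdjoinRoot.adjoinRoot_eq_top] at halg
  obtain ⟨M, hM0, hM⟩ := halg (AdjoinRoot.mk q f) Algebra.mem_top
  refine ⟨M, hM0, AdjoinRoot.mk_eq_zero.mp ?_⟩
  rw [comp, hom_eval₂, ← hM]
  rfl

theorem exists_dvd_sub_algebraMap_of_dvd_aeval {K A : Type*} [Field K] [IsAlgClosed K]
    [CommRing A] [Algebra K A] {q x : A} (hq : Prime q) {N : K[X]} (hN : N ≠ 0)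
    (h : q ∣ aeval x N) : ∃ c : K, q ∣ x - algebraMap K A c := by
  rw [← C_leadingCoeff_mul_prod_multiset_X_sub_C (p := N) IsAlgClosed.card_roots_eq_natDegree,
    map_mul, aeval_C, map_multiset_prod, Multiset.map_map] at h
  rcases hq.dvd_or_dvd h with hu | hprod
  · exact absurd (isUnit_of_dvd_unit hu ((leadingCoeff_ne_zero.2 hN).isUnit.map _)) hq.not_isUnit
  · obtain ⟨r, -, hr⟩ := hq.exists_mem_multiset_map_dvd hprod
    exact ⟨r, by simpa using hr⟩

theorem C_X_sub_C_dvd_iff_map_evalRingHom_eq_zero {R : Type*} [CommRing R] (a : R)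
    (g : R[X][X]) : C (X - C a) ∣ g ↔ g.map (evalRingHom a) = 0 := by
  simp only [C_dvd_iff_dvd_coeff, Polynomial.ext_iff, dvd_iff_isRoot, IsRoot.def, coeff_map,
    coe_evalRingHom, coeff_zero]

theorem exists_C_X_sub_C_dvd_sub_C_of_dvd_derivative {K : Type*} [Field K] [CharZero K] {a : K}
    {f : K[X][X]} (h : C (X - C a) ∣ derivative f) : ∃ c : K, C (X - C a) ∣ f - C (C c) := by
  rw [C_X_sub_C_dvd_iff_map_evalRingHom_eq_zero, ← derivative_map] at h
  refine ⟨(f.map (evalRingHom a)).coeff 0, ?_⟩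
  rw [C_X_sub_C_dvd_iff_map_evalRingHom_eq_zero, Polynomial.map_sub, map_C, coe_evalRingHom,
    eval_C, ← eq_C_of_derivative_eq_zero h, sub_self]

end Polynomial

theorem Ideal.IsPrime.exists_mem_prime_dvd {R : Type*} [CommRing R] [IsDomain R]
    [UniqueFactorizationMonoid R] {P : Ideal R} (hP : P.IsPrime) (hP0 : P ≠ ⊥) {x : R}
    (hx : x ∈ P) : ∃ p ∈ P, Prime p ∧ p ∣ x := by
  induction x using UniqueFactorizationMonoid.induction_on_prime with
  | h₁ =>
    obtain ⟨p, hpP, hp⟩ := hP.exists_mem_prime_of_ne_bot hP0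
    exact ⟨p, hpP, hp, dvd_zero p⟩
  | h₂ u hu => exact absurd (P.eq_top_of_isUnit_mem hx hu) hP.ne_top
  | h₃ y p _ hp ih =>
    rcases hP.mem_or_mem hx with hpP | hyP
    · exact ⟨p, hpP, hp, dvd_mul_right p y⟩
    · obtain ⟨r, hrP, hr, hry⟩ := ih hyP
      exact ⟨r, hrP, hr, hry.mul_left p⟩

def dXDerivation : Derivation ℂ CXY CXY :=
  PolynomialModule.equivPolynomialSelf.compDer (derivative' (R := ℂ)).mapCoeffs

theorem coeff_dX (f : CXY) (n : ℕ) : (dX f).coeff n = derivative (f.coeff n) := by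
  rw [dX, Polynomial.sum, finsetSum_coeff]
  simp only [coeff_C_mul, coeff_X_pow, mul_ite, mul_one, mul_zero]
  rw [Finset.sum_ite_eq f.support n (fun k => derivative (f.coeff k))]
  split_ifs with hn
  · rfl
  · rw [notMem_support_iff.mp hn, map_zero]

theorem dXDerivation_apply (f : CXY) : dXDerivation f = dX f := by
  ext n
  rw [coeff_dX]
  rfl

theorem dX_C (a : ℂ[X]) : dX (C a) = C (derivative a) := by
  ext n
  rw [coeff_dX, coeff_C, coeff_C]
  split_ifs <;> simp

theorem dX_X : dX (X : CXY) = 0 := by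
  ext n
  rw [coeff_dX, coeff_X]
  split_ifs <;> simp

theorem dX_comp (M f : CXY) :
    dX (M.comp f) = (dX M).comp f + (derivative M).comp f * dX f := by
  simp only [← dXDerivation_apply]
  induction M using Polynomial.induction_on' with
  | add p q hp hq => simp only [add_comp, map_add, hp, hq]; ring
  | monomial n a =>
    have hD : dXDerivation (C a * X ^ n) = C (derivative a) * X ^ n := by
      simp only [Derivation.leibniz, Derivation.leibniz_pow, dXDerivation_apply, dX_X, dX_C,
        smul_eq_mul, smul_zero, mul_zero, zero_add]
      ring
    rw [← C_mul_X_pow_eq_monomial, hD, derivative_C_mul_X_pow]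
    simp only [mul_comp, C_comp, X_pow_comp, Derivation.leibniz, Derivation.leibniz_pow,
      smul_eq_mul, nsmul_eq_mul, dXDerivation_apply, dX_C, C_mul, map_natCast, natCast_comp]
    ring

theorem not_dvd_dX_or_not_dvd_dY {q : CXY} (hq : Prime q) : ¬q ∣ dX q ∨ ¬q ∣ dY q := by
  rcases Nat.eq_zero_or_pos q.natDegree with h0 | hpos
  · left
    rw [eq_C_of_natDegree_eq_zero h0] at hq ⊢
    intro hdvd
    have ha : q.coeff 0 ∣ derivative (q.coeff 0) := by
      simpa [dX_C] using (C_dvd_iff_dvd_coeff _ _).mp hdvd 0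
    have hpos := natDegree_pos_iff_degree_pos.mpr
      (degree_pos_of_irreducible (prime_C_iff.mp hq).irreducible)
    exact hpos.ne' (derivative_eq_zero.mp (dvd_derivative_iff.mp ha))
  · right
    rw [dY, dvd_derivative_iff]
    exact fun h => hpos.ne' (derivative_eq_zero.mp h)

theorem mul_self_dvd_of_dvd_dX_of_dvd_dY {q f : CXY} (hq : Prime q) (hf : q ∣ f)
    (hx : q ∣ dX f) (hy : q ∣ dY f) : q * q ∣ f := by
  rcases not_dvd_dX_or_not_dvd_dY hq with hqx | hqy
  · rw [← dXDerivation_apply] at hqx hx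
    exact dXDerivation.mul_self_dvd_of_dvd_of_dvd_apply hq hqx hf hx
  · exact derivative'.mul_self_dvd_of_dvd_of_dvd_apply hq hqy hf hy

theorem dvd_comp_dX_of_dvd_comp {q f M : CXY} (hq : Prime q) (hqy : ¬q ∣ dY q)
    (hx : q ∣ dX f) (hy : q ∣ dY f) (hM : q ∣ M.comp f) : q ∣ (dX M).comp f := by
  have hMy : q ∣ dY (M.comp f) := by
    rw [dY, derivative_comp]
    exact hy.mul_right _
  have hMx := dXDerivation.dvd_apply_of_mul_self_dvd
    (derivative'.mul_self_dvd_of_dvd_of_dvd_apply hq hqy hM hMy)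
  rw [dXDerivation_apply, dX_comp] at hMx
  exact (dvd_add_left (hx.mul_left _)).mp hMx

theorem exists_C_mul_map_C_mem_of_dX_mem {J : Ideal CXY} (hJ : ∀ M ∈ J, dX M ∈ J) {M : CXY}
    (hM : M ∈ J) (hM0 : M ≠ 0) : ∃ a ≠ 0, ∃ N : ℂ[X], N ≠ 0 ∧ C a * N.map C ∈ J := by
  induction hn : M.natDegree using Nat.strong_induction_on generalizing M with
  | _ n ih =>
  set a := M.leadingCoeff
  have ha : a ≠ 0 := leadingCoeff_ne_zero.mpr hM0
  set P := C (derivative a) * M - C a * dX M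
  have hPJ : P ∈ J := J.sub_mem (J.mul_mem_left _ hM) (J.mul_mem_left _ (hJ M hM))
  have hP : ∀ k, P.coeff k = -wronskian a (M.coeff k) := fun k => by
    simp only [P, coeff_sub, coeff_C_mul, coeff_dX, wronskian]
    ring
  by_cases hP0 : P = 0
  · obtain ⟨N, hN⟩ := exists_eq_C_mul_map_C_of_wronskian_coeff_eq_zero hM0 fun k => by
      simpa [hP0] using hP k
    refine ⟨a, ha, N, ?_, hN ▸ hM⟩
    rintro rfl
    exact hM0 (by simpa using hN)
  · refine ih P.natDegree ?_ hPJ hP0 rfl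
    rw [natDegree_lt_iff_degree_lt hP0, degree_lt_iff_coeff_zero]
    intro k hk
    rw [hP k, neg_eq_zero]
    rcases hk.eq_or_lt with rfl | hlt
    · rw [← hn]
      exact wronskian_self_eq_zero a
    · rw [coeff_eq_zero_of_natDegree_lt (hn ▸ hlt), wronskian_zero_right]

theorem exists_dvd_sub_C_of_dvd_dX_of_dvd_dY_of_natDegree_pos {q f : CXY} (hq : Prime q)
    (hdeg : 0 < q.natDegree) (hx : q ∣ dX f) (hy : q ∣ dY f) : ∃ c : ℂ, q ∣ f - C (C c) := by
  let J := Ideal.comap (compRingHom f) (Ideal.span {q})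
  have hJ : ∀ M, M ∈ J ↔ q ∣ M.comp f := fun M => by simp [J, Ideal.mem_span_singleton]
  obtain ⟨M, hM0, hM⟩ := exists_ne_zero_dvd_comp hq.ne_zero f
  have hqy : ¬q ∣ dY q := by
    rw [dY, dvd_derivative_iff]
    exact fun h => hdeg.ne' (derivative_eq_zero.mp h)
  have hJdX : ∀ M' ∈ J, dX M' ∈ J := fun M' hM' =>
    (hJ _).mpr (dvd_comp_dX_of_dvd_comp hq hqy hx hy ((hJ M').mp hM'))
  obtain ⟨a, ha, N, hN, haN⟩ := exists_C_mul_map_C_mem_of_dX_mem hJdX ((hJ M).mpr hM) hM0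
  have hNf : (N.map C).comp f = aeval f N := by
    rw [comp, eval₂_map, aeval_def]
    rfl
  rw [hJ, mul_comp, C_comp, hNf] at haN
  have hqN := (hq.dvd_or_dvd haN).resolve_left (not_dvd_C_of_natDegree_pos hdeg ha)
  exact exists_dvd_sub_algebraMap_of_dvd_aeval hq hN hqN

theorem exists_dvd_sub_C_of_dvd_dX_of_dvd_dY {q f : CXY} (hq : Prime q) (hx : q ∣ dX f)
    (hy : q ∣ dY f) : ∃ c : ℂ, q ∣ f - C (C c) := by
  rcases Nat.eq_zero_or_pos q.natDegree with h0 | hpos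
  · rw [eq_C_of_natDegree_eq_zero h0] at hq hy ⊢
    have ha := (prime_C_iff.mp hq).irreducible
    obtain ⟨α, hα⟩ := IsAlgClosed.exists_root _ (degree_pos_of_irreducible ha).ne'
    have hassoc : Associated (C (X - C α)) (C (q.coeff 0)) :=
      ((irreducible_X_sub_C α).associated_of_dvd ha (dvd_iff_isRoot.mpr hα)).map C
    simp only [← hassoc.dvd_iff_dvd_left] at hy ⊢
    exact exists_C_X_sub_C_dvd_sub_C_of_dvd_derivative hy
  · exact exists_dvd_sub_C_of_dvd_dX_of_dvd_dY_of_natDegree_pos hq hpos hx hy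

def evalAtHom (α β : ℂ) : CXY →+* ℂ := eval₂RingHom (evalRingHom α) β

theorem evalAtHom_apply (α β : ℂ) (g : CXY) : evalAtHom α β g = evalAt α β g :=
  (eval_map _ _).symm

theorem exists_prime_dvd_of_evalAt_eq_zero {α β : ℂ} {h : CXY} (hh : evalAt α β h = 0) :
    ∃ q : CXY, evalAt α β q = 0 ∧ Prime q ∧ q ∣ h := by
  have hker : C (X - C α) ∈ RingHom.ker (evalAtHom α β) := by
    simp [evalAtHom_apply, evalAt, fiber]
  simp only [← evalAtHom_apply, ← RingHom.mem_ker] at hh ⊢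
  refine (RingHom.ker_isPrime _).exists_mem_prime_dvd ?_ hh
  exact (Submodule.ne_bot_iff _).mpr ⟨_, hker, C_ne_zero.mpr (X_sub_C_ne_zero α)⟩

theorem gcd_partials_not_vanishing_at_critical_general (f h : CXY)
    (hsf : Squarefree f)
    (hdvd1 : h ∣ dX f) (hdvd2 : h ∣ dY f)
    (α β : ℂ) (hf0 : evalAt α β f = 0) :
    evalAt α β h ≠ 0 := by
  intro hh
  obtain ⟨q, hqp, hq, hqh⟩ := exists_prime_dvd_of_evalAt_eq_zero hh
  have hx := hqh.trans hdvd1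
  have hy := hqh.trans hdvd2
  obtain ⟨c, hc⟩ := exists_dvd_sub_C_of_dvd_dX_of_dvd_dY hq hx hy
  have hc0 : c = 0 := by
    obtain ⟨w, hw⟩ := hc
    have := congrArg (evalAtHom α β) hw
    rw [← evalAtHom_apply] at hqp hf0
    rw [map_sub, map_mul, hqp, hf0, zero_mul, zero_sub, neg_eq_zero] at this
    simpa [evalAtHom] using this
  rw [hc0, map_zero, map_zero, sub_zero] at hc
  exact hq.not_isUnit (hsf q (mul_self_dvd_of_dvd_dX_of_dvd_dY hq hc hx hy))

/-- Let `f ∈ ℂ[x,y]` be square-free and let `h = gcd(f_x, f_y)` be a greatest common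
divisor of its partial derivatives.  Then `h` does not vanish at any `x`-critical point of
`C = V(f)`: for every `p = (α,β)` with `f(p) = f_y(p) = 0` one has `h(p) ≠ 0`. -/
theorem gcd_partials_not_vanishing_at_critical (f h : CXY)
    (hsf : Squarefree f)
    (hdvd1 : h ∣ dX f) (hdvd2 : h ∣ dY f)
    (hgcd : ∀ d : CXY, d ∣ dX f → d ∣ dY f → d ∣ h)
    (α β : ℂ) (hf0 : evalAt α β f = 0) (hfy0 : evalAt α β (dY f) = 0) :
    evalAt α β h ≠ 0 :=
  gcd_partials_not_vanishing_at_critical_general f h hsf hdvd1 hdvd2 α β hf0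
end
end

section
/- Let f ∈ ℝ[x,y] and let I ⊂ ℝ be an open interval such that: (i) the leading coefficient of f with respect to y does not vanish at any x ∈ I, and (ii) for every (x,y) ∈ I × ℝ with f(x,y) = 0 one has f_y(x,y) ≠ 0 (no x-critical point of V(f) lies above I). Then f is delineable over I: there exist an integer m ≥ 0 and continuous functions φ_1, …, φ_m : I → ℝ with φ_1(x) < φ_2(x) < … < φ_m(x) for all x ∈ I, such that the real zero set {(x,y) ∈ I × ℝ : f(x,y) = 0} is exactly the union of the graphs of φ_1, …, φ_m. In particular, for every x ∈ I the polynomial f(x,·) ∈ ℝ[y] has exactly m distinct real roots. -/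
open Polynomial

noncomputable section

/-- The polynomial ring `ℝ[x][y]` (inner variable `x`, outer variable `y`), our model of
the bivariate polynomial ring `ℝ[x,y]`. -/
abbrev RXY := Polynomial (Polynomial ℝ)

/-- The univariate polynomial `f(x, ·) ∈ ℝ[y]`. -/
noncomputable def fiberR (f : RXY) (x : ℝ) : Polynomial ℝ := f.map (evalRingHom x)

/-- The value `f(x, y)`. -/
noncomputable def evalAtR (x y : ℝ) (f : RXY) : ℝ := (fiberR f x).eval y

open Set


lemma fiber_coeff (f : RXY) (x : ℝ) (i : ℕ) : (fiberR f x).coeff i = (f.coeff i).eval x := by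
  simp [fiberR, coeff_map]

lemma fiber_ne_zero {f : RXY} {x : ℝ} (h : f.leadingCoeff.eval x ≠ 0) : fiberR f x ≠ 0 := by
  intro h0
  have : (fiberR f x).coeff f.natDegree = 0 := by rw [h0]; simp
  rw [fiber_coeff] at this
  exact h this

lemma fiber_natDegree {f : RXY} {x : ℝ} (h : f.leadingCoeff.eval x ≠ 0) :
    (fiberR f x).natDegree = f.natDegree :=
  natDegree_map_of_leadingCoeff_ne_zero _ h

lemma fiber_derivative (f : RXY) (x : ℝ) :
    derivative (fiberR f x) = fiberR (derivative f) x := by simp [fiberR, derivative_map]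

lemma continuous_evalAtR (f : RXY) : Continuous fun q : ℝ × ℝ => evalAtR q.1 q.2 f := by
  have hrw : ∀ q : ℝ × ℝ, evalAtR q.1 q.2 f
      = ∑ i ∈ Finset.range (f.natDegree + 1), (f.coeff i).eval q.1 * q.2 ^ i := by
    intro q
    simp only [evalAtR, fiberR, eval_map]
    rw [eval₂_eq_sum_range]
    rfl
  simp only [hrw]
  exact continuous_finset_sum _ fun i _ =>
    ((f.coeff i).continuous.comp continuous_fst).mul (continuous_snd.pow i)


-- sign change at a simple root
lemma sign_change (p : Polynomial ℝ) (y₀ : ℝ) (h0 : p.eval y₀ = 0)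
    (hd : p.derivative.eval y₀ ≠ 0) (ε : ℝ) (hε : 0 < ε) :
    ∃ u v : ℝ, u ∈ Ioo (y₀ - ε) y₀ ∧ v ∈ Ioo y₀ (y₀ + ε) ∧ p.eval u * p.eval v < 0 := by
  set d := p.derivative.eval y₀ with hd'
  have hder : HasDerivAt (fun z => p.eval z) d y₀ := p.hasDerivAt y₀
  have hslope := hasDerivAt_iff_tendsto_slope.1 hder
  have hball : Metric.ball d |d| ∈ nhds d := Metric.ball_mem_nhds _ (abs_pos.2 hd)
  have hev : ∀ᶠ z in nhdsWithin y₀ {y₀}ᶜ, slope (fun z => p.eval z) y₀ z ∈ Metric.ball d |d| :=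
    hslope hball
  rw [eventually_nhdsWithin_iff] at hev
  rw [Metric.eventually_nhds_iff] at hev
  obtain ⟨δ, hδ, hδprop⟩ := hev
  set r := min δ ε / 2 with hr
  have hrpos : 0 < r := by positivity
  have hrδ : r < δ := by
    have : min δ ε ≤ δ := min_le_left _ _
    linarith
  have hrε : r < ε := by
    have : min δ ε ≤ ε := min_le_right _ _
    linarith
  refine ⟨y₀ - r, y₀ + r, ⟨by linarith, by linarith⟩, ⟨by linarith, by linarith⟩, ?_⟩
  have hu : slope (fun z => p.eval z) y₀ (y₀ - r) ∈ Metric.ball d |d| := by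
    apply hδprop (by rw [Real.dist_eq]; rw [show y₀ - r - y₀ = -r by ring]; rw [abs_neg, abs_of_pos hrpos]; exact hrδ)
    simp only [mem_compl_iff, mem_singleton_iff]; intro h; linarith
  have hv : slope (fun z => p.eval z) y₀ (y₀ + r) ∈ Metric.ball d |d| := by
    apply hδprop (by rw [Real.dist_eq]; rw [show y₀ + r - y₀ = r by ring]; rw [abs_of_pos hrpos]; exact hrδ)
    simp only [mem_compl_iff, mem_singleton_iff]; intro h; linarith
  rw [Metric.mem_ball, Real.dist_eq] at hu hv
  have hslu : slope (fun z => p.eval z) y₀ (y₀ - r) = p.eval (y₀ - r) / (-r) := by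
    rw [slope_def_field]; rw [h0]; ring_nf
  have hslv : slope (fun z => p.eval z) y₀ (y₀ + r) = p.eval (y₀ + r) / r := by
    rw [slope_def_field]; rw [h0]; ring_nf
  rw [hslu] at hu; rw [hslv] at hv
  -- slopes have same sign as d
  have h1 : (p.eval (y₀ - r) / (-r)) * d > 0 := by
    rcases abs_sub_lt_iff.1 hu with ⟨a, b⟩
    rcases lt_or_gt_of_ne hd with h | h
    · rw [abs_of_neg h] at a b; nlinarith
    · rw [abs_of_pos h] at a b; nlinarith
  have h2 : (p.eval (y₀ + r) / r) * d > 0 := by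
    rcases abs_sub_lt_iff.1 hv with ⟨a, b⟩
    rcases lt_or_gt_of_ne hd with h | h
    · rw [abs_of_neg h] at a b; nlinarith
    · rw [abs_of_pos h] at a b; nlinarith
  have hd2 : 0 < d * d := mul_self_pos.2 hd
  have h12 := mul_pos h1 h2
  have hprod : (p.eval (y₀ - r) / (-r)) * (p.eval (y₀ + r) / r) > 0 := by nlinarith
  have : p.eval (y₀ - r) * p.eval (y₀ + r) = (p.eval (y₀ - r) / (-r)) * (p.eval (y₀ + r) / r) * (-r * r) := by
    field_simp
  rw [this]
  nlinarith [mul_pos hprod (mul_pos hrpos hrpos)]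

-- injectivity where derivative doesn't vanish
lemma injOn_of_deriv_ne (p : Polynomial ℝ) (a b : ℝ)
    (h : ∀ y ∈ Icc a b, p.derivative.eval y ≠ 0) :
    Set.InjOn (fun y => p.eval y) (Icc a b) := by
  rcases le_or_gt a b with hab | hab
  swap
  · rw [Icc_eq_empty (not_le.2 hab)]; exact Set.injOn_empty _
  have hcont : ContinuousOn (fun y => p.derivative.eval y) (Icc a b) :=
    (p.derivative.continuous).continuousOn
  have hpre : IsPreconnected ((fun y => p.derivative.eval y) '' Icc a b) :=
    (isPreconnected_Icc).image _ hcont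
  have hsub : ((fun y => p.derivative.eval y) '' Icc a b) ⊆ Iio 0 ∪ Ioi 0 := by
    rintro z ⟨y, hy, rfl⟩
    rcases lt_or_gt_of_ne (h y hy) with h1 | h1
    · exact Or.inl h1
    · exact Or.inr h1
  have := hpre.subset_or_subset isOpen_Iio isOpen_Ioi (by
      rw [Set.disjoint_left]; rintro x h1 h2
      rw [Set.mem_Iio] at h1; rw [Set.mem_Ioi] at h2; linarith) hsub
  have hderiv : ∀ y, deriv (fun z => p.eval z) y = p.derivative.eval y := fun y => Polynomial.deriv _
  rcases this with hneg | hpos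
  · have : StrictAntiOn (fun y => p.eval y) (Icc a b) := by
      apply strictAntiOn_of_deriv_neg (convex_Icc a b) (p.continuous).continuousOn
      intro y hy
      rw [hderiv]
      have : p.derivative.eval y ∈ Iio 0 := hneg ⟨y, interior_subset hy, rfl⟩
      exact this
    exact this.injOn
  · have : StrictMonoOn (fun y => p.eval y) (Icc a b) := by
      apply strictMonoOn_of_deriv_pos (convex_Icc a b) (p.continuous).continuousOn
      intro y hy
      rw [hderiv]
      have : p.derivative.eval y ∈ Ioi 0 := hpos ⟨y, interior_subset hy, rfl⟩
      exact this
    exact this.injOn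

-- compactness: avoiding zeros over a compact y-set
lemma avoid_zeros {F : ℝ × ℝ → ℝ} (hF : Continuous F) {Y : Set ℝ} (hY : IsCompact Y)
    (x₀ : ℝ) (h : ∀ y ∈ Y, F (x₀, y) ≠ 0) :
    ∃ δ > 0, ∀ x : ℝ, |x - x₀| < δ → ∀ y ∈ Y, F (x, y) ≠ 0 := by
  set K : Set (ℝ × ℝ) := Icc (x₀ - 1) (x₀ + 1) ×ˢ Y with hK
  have hKc : IsCompact K := (isCompact_Icc).prod hY
  set Z := K ∩ F ⁻¹' {0} with hZ
  have hZc : IsCompact Z := hKc.inter_right (isClosed_singleton.preimage hF)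
  have hCc : IsCompact (Prod.fst '' Z) := hZc.image continuous_fst
  have hx₀ : x₀ ∉ Prod.fst '' Z := by
    rintro ⟨⟨x, y⟩, ⟨⟨hx, hy⟩, hF0⟩, rfl⟩
    exact h y hy (by simpa using hF0)
  have hopen : IsOpen (Prod.fst '' Z)ᶜ := hCc.isClosed.isOpen_compl
  obtain ⟨δ, hδ, hball⟩ := Metric.isOpen_iff.1 hopen x₀ hx₀
  refine ⟨min δ 1, by positivity, fun x hx y hy hF0 => ?_⟩
  have hx1 : |x - x₀| < 1 := lt_of_lt_of_le hx (min_le_right _ _)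
  have hxδ : |x - x₀| < δ := lt_of_lt_of_le hx (min_le_left _ _)
  have : x ∈ (Prod.fst '' Z)ᶜ := hball (by rwa [Metric.mem_ball, Real.dist_eq])
  exact this ⟨(x, y), ⟨⟨⟨by cases abs_sub_lt_iff.1 hx1; linarith, by cases abs_sub_lt_iff.1 hx1; linarith⟩, hy⟩, by simpa using hF0⟩, rfl⟩

-- finite choice of a uniform positive radius
lemma fin_choice_pos {k : ℕ} {P : Fin k → ℝ → Prop}
    (h : ∀ j, ∃ r > 0, P j r)
    (hmono : ∀ j r r', 0 < r' → r' ≤ r → P j r → P j r') :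
    ∃ r > 0, ∀ j, P j r := by
  choose rf hrf hP using h
  rcases Nat.eq_zero_or_pos k with rfl | hk
  · exact ⟨1, one_pos, fun j => j.elim0⟩
  have : Nonempty (Fin k) := Fin.pos_iff_nonempty.1 hk
  have hne : (Finset.univ : Finset (Fin k)).Nonempty := Finset.univ_nonempty
  refine ⟨Finset.univ.inf' hne rf, ?_, fun j => ?_⟩
  · exact (Finset.lt_inf'_iff _).2 fun j _ => hrf j
  · exact hmono j (rf j) _ ((Finset.lt_inf'_iff _).2 fun j _ => hrf j)
      (Finset.inf'_le _ (Finset.mem_univ j)) (hP j)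

lemma root_bound (f : RXY) (x₀ : ℝ) (ha : f.leadingCoeff.eval x₀ ≠ 0) :
    ∃ B > 0, ∃ δ > 0, ∀ x : ℝ, |x - x₀| < δ → ∀ z : ℝ, B ≤ |z| → (fiberR f x).eval z ≠ 0 := by
  set n := f.natDegree with hn
  set a := |f.leadingCoeff.eval x₀| / 2 with haa
  have ha2 : 0 < a := by positivity
  -- leading coeff stays large
  have hca : ContinuousAt (fun x => f.leadingCoeff.eval x) x₀ :=
    (f.leadingCoeff.continuous).continuousAt
  rw [Metric.continuousAt_iff] at hca
  obtain ⟨δa, hδa, hma⟩ := hca a ha2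
  have hlca : ∀ x : ℝ, |x - x₀| < δa → a < |f.leadingCoeff.eval x| := by
    intro x hx
    have h2 := hma (by rwa [Real.dist_eq] : dist x x₀ < δa)
    rw [Real.dist_eq] at h2
    have h3 := abs_sub_abs_le_abs_sub (f.leadingCoeff.eval x₀) (f.leadingCoeff.eval x)
    rw [abs_sub_comm (f.leadingCoeff.eval x₀) (f.leadingCoeff.eval x)] at h3
    have h4 : |f.leadingCoeff.eval x₀| = 2 * a := by rw [haa]; ring
    linarith
  -- sum of lower coefficients stays bounded
  set Ssum : ℝ → ℝ := fun x => ∑ i ∈ Finset.range n, |(f.coeff i).eval x| with hSsum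
  have hSc : ContinuousAt Ssum x₀ :=
    (continuous_finset_sum _ fun i _ => ((f.coeff i).continuous).abs).continuousAt
  rw [Metric.continuousAt_iff] at hSc
  obtain ⟨δc, hδc, hmc⟩ := hSc 1 one_pos
  set S := Ssum x₀ + 1 with hS
  have hSbound : ∀ x : ℝ, |x - x₀| < δc → Ssum x < S := by
    intro x hx
    have h2 := hmc (by rwa [Real.dist_eq] : dist x x₀ < δc)
    rw [Real.dist_eq] at h2
    have := (abs_sub_lt_iff.1 h2).1
    linarith
  have hSpos : 0 < S := by
    have : 0 ≤ Ssum x₀ := Finset.sum_nonneg fun i _ => abs_nonneg _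
    linarith
  refine ⟨max 1 ((S + a) / a), lt_of_lt_of_le one_pos (le_max_left _ _), min δa δc,
    lt_min hδa hδc, fun x hx z hz => ?_⟩
  have hxa : |x - x₀| < δa := lt_of_lt_of_le hx (min_le_left _ _)
  have hxc : |x - x₀| < δc := lt_of_lt_of_le hx (min_le_right _ _)
  have hz1 : (1:ℝ) ≤ |z| := le_trans (le_max_left _ _) hz
  have hz2 : (S + a) / a ≤ |z| := le_trans (le_max_right _ _) hz
  have hlc : a < |f.leadingCoeff.eval x| := hlca x hxa
  have hSx : Ssum x < S := hSbound x hxc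
  -- expand the evaluation
  have hdeg : (fiberR f x).natDegree < n + 1 :=
    Nat.lt_succ_of_le natDegree_map_le
  have heval : (fiberR f x).eval z
      = (∑ i ∈ Finset.range n, (f.coeff i).eval x * z ^ i) + f.leadingCoeff.eval x * z ^ n := by
    rw [eval_eq_sum_range' hdeg, Finset.sum_range_succ]
    simp only [fiber_coeff]
    rfl
  intro h0
  -- the tail estimate
  have htail : |∑ i ∈ Finset.range n, (f.coeff i).eval x * z ^ i| ≤ S * |z| ^ (n - 1) := by
    calc |∑ i ∈ Finset.range n, (f.coeff i).eval x * z ^ i|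
        ≤ ∑ i ∈ Finset.range n, |(f.coeff i).eval x * z ^ i| := Finset.abs_sum_le_sum_abs _ _
      _ ≤ ∑ i ∈ Finset.range n, |(f.coeff i).eval x| * |z| ^ (n - 1) := by
          apply Finset.sum_le_sum
          intro i hi
          rw [abs_mul, abs_pow]
          apply mul_le_mul_of_nonneg_left _ (abs_nonneg _)
          exact pow_le_pow_right₀ hz1 (Nat.le_sub_one_of_lt (Finset.mem_range.1 hi))
      _ = Ssum x * |z| ^ (n - 1) := by rw [← Finset.sum_mul]
      _ ≤ S * |z| ^ (n - 1) := by
          apply mul_le_mul_of_nonneg_right (le_of_lt hSx) (by positivity)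
  rcases Nat.eq_zero_or_pos n with hn0 | hn1
  · -- degree 0 : eval equals leading coefficient, nonzero
    rw [hn0] at heval
    simp only [Finset.range_zero, Finset.sum_empty, pow_zero, zero_add, mul_one] at heval
    rw [heval] at h0
    rw [h0] at hlc
    simp at hlc
    linarith
  · -- degree ≥ 1
    have hzn : |z| ^ n = |z| * |z| ^ (n - 1) := by
      conv_lhs => rw [show n = (n - 1) + 1 from (Nat.succ_pred_eq_of_pos hn1).symm]
      ring
    have hlead : (S + a) * |z| ^ (n - 1) ≤ |f.leadingCoeff.eval x * z ^ n| := by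
      rw [abs_mul, abs_pow, hzn]
      have h1 : S + a ≤ a * |z| := by
        rw [div_le_iff₀ ha2] at hz2
        linarith
      calc (S + a) * |z| ^ (n - 1) ≤ (a * |z|) * |z| ^ (n - 1) := by
            apply mul_le_mul_of_nonneg_right h1 (by positivity)
        _ ≤ (|f.leadingCoeff.eval x| * |z|) * |z| ^ (n - 1) := by
            apply mul_le_mul_of_nonneg_right _ (by positivity)
            apply mul_le_mul_of_nonneg_right (le_of_lt hlc) (abs_nonneg _)
        _ = |f.leadingCoeff.eval x| * (|z| * |z| ^ (n - 1)) := by ring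
    have hpow1 : (1:ℝ) ≤ |z| ^ (n - 1) := one_le_pow₀ hz1
    have habs : |f.leadingCoeff.eval x * z ^ n|
        ≤ |∑ i ∈ Finset.range n, (f.coeff i).eval x * z ^ i| := by
      have : f.leadingCoeff.eval x * z ^ n
          = -(∑ i ∈ Finset.range n, (f.coeff i).eval x * z ^ i) := by linarith [heval, h0]
      rw [this, abs_neg]
    nlinarith [htail, hlead, habs, hpow1]

lemma key (f : RXY) (I : Set ℝ) (hIopen : IsOpen I)
    (hlc : ∀ x ∈ I, f.leadingCoeff.eval x ≠ 0)
    (hcrit : ∀ x ∈ I, ∀ y : ℝ, evalAtR x y f = 0 → evalAtR x y (derivative f) ≠ 0)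
    (x₀ : ℝ) (hx₀ : x₀ ∈ I) (m : ℕ) (hm : (fiberR f x₀).roots.toFinset.card = m)
    (ε : ℝ) (hε : 0 < ε) :
    ∃ δ > 0, ∀ x : ℝ, |x - x₀| < δ → x ∈ I ∧
      ∃ h : (fiberR f x).roots.toFinset.card = m,
      ∀ j : Fin m, |(fiberR f x).roots.toFinset.orderEmbOfFin h j
        - (fiberR f x₀).roots.toFinset.orderEmbOfFin hm j| < ε := by
  have hp0 : fiberR f x₀ ≠ 0 := fiber_ne_zero (hlc x₀ hx₀)
  set p := fiberR f x₀ with hp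
  set R₀ := p.roots.toFinset with hR₀
  set y : Fin m → ℝ := fun j => R₀.orderEmbOfFin hm j with hy
  have hymono : StrictMono y := (R₀.orderEmbOfFin hm).strictMono
  have hyroot : ∀ j, p.eval (y j) = 0 := by
    intro j
    have h1 : y j ∈ R₀ := R₀.orderEmbOfFin_mem hm j
    rw [hR₀, Multiset.mem_toFinset, mem_roots hp0] at h1
    exact h1
  have hyd : ∀ j, evalAtR x₀ (y j) (derivative f) ≠ 0 := fun j =>
    hcrit x₀ hx₀ (y j) (hyroot j)
  have hydp : ∀ j, p.derivative.eval (y j) ≠ 0 := by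
    intro j
    rw [hp, fiber_derivative]
    exact hyd j
  -- gap between the roots
  obtain ⟨g, hg, hgap⟩ : ∃ g > 0, ∀ j j' : Fin m, j < j' → 2 * g ≤ y j' - y j := by
    set P := Finset.univ.filter (fun q : Fin m × Fin m => q.1 < q.2) with hP
    rcases P.eq_empty_or_nonempty with hPe | hPn
    · refine ⟨1, one_pos, fun j j' hjj' => ?_⟩
      exfalso
      have hmm : (j, j') ∈ P := Finset.mem_filter.2 ⟨Finset.mem_univ _, hjj'⟩
      rw [hPe] at hmm
      exact Finset.notMem_empty _ hmm
    · refine ⟨P.inf' hPn (fun q => (y q.2 - y q.1) / 2), ?_, fun j j' hjj' => ?_⟩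
      · refine (Finset.lt_inf'_iff _).2 fun q hq => ?_
        have : q.1 < q.2 := (Finset.mem_filter.1 hq).2
        have := hymono this
        linarith
      · have hmem : (j, j') ∈ P := Finset.mem_filter.2 ⟨Finset.mem_univ _, hjj'⟩
        have := Finset.inf'_le (fun q : Fin m × Fin m => (y q.2 - y q.1) / 2) hmem
        linarith
  -- derivative non-vanishing on uniform boxes around roots
  obtain ⟨r, hr, hder⟩ : ∃ r > 0, ∀ j : Fin m, ∀ x z : ℝ,
      |x - x₀| < r → |z - y j| ≤ r → evalAtR x z (derivative f) ≠ 0 := by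
    have h1 : ∀ j : Fin m, ∃ r > 0, ∀ x z : ℝ,
        |x - x₀| < r → |z - y j| ≤ r → evalAtR x z (derivative f) ≠ 0 := by
      intro j
      have hc : ContinuousAt (fun q : ℝ × ℝ => evalAtR q.1 q.2 (derivative f)) (x₀, y j) :=
        (continuous_evalAtR (derivative f)).continuousAt
      rw [Metric.continuousAt_iff] at hc
      obtain ⟨δ, hδ, hδp⟩ := hc |evalAtR x₀ (y j) (derivative f)| (abs_pos.2 (hyd j))
      refine ⟨δ / 2, by positivity, fun x z h1 h2 h0 => ?_⟩
      have : dist ((x, z) : ℝ × ℝ) (x₀, y j) < δ := by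
        rw [Prod.dist_eq]
        rw [Real.dist_eq, Real.dist_eq]
        apply max_lt (lt_of_lt_of_le (lt_of_lt_of_le h1 (le_refl _)) (by linarith))
        linarith [h2]
      have := hδp this
      rw [h0, Real.dist_eq, zero_sub, abs_neg] at this
      exact lt_irrefl _ this
    exact fin_choice_pos h1 (fun j r r' hr' hle hP x z h1 h2 =>
      hP x z (lt_of_lt_of_le h1 hle) (le_trans h2 hle))
  -- bound on roots
  obtain ⟨B, hB, δB, hδB, hbound⟩ := root_bound f x₀ (hlc x₀ hx₀)
  have hyB : ∀ j, |y j| < B := by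
    intro j
    by_contra h
    exact hbound x₀ (by simpa using hδB) (y j) (not_lt.1 h) (hyroot j)
  -- the radius
  set ε' := min ε (min g r) with hε'def
  have hε'pos : 0 < ε' := lt_min hε (lt_min hg hr)
  have hε'ε : ε' ≤ ε := min_le_left _ _
  have hε'g : ε' ≤ g := le_trans (min_le_right _ _) (min_le_left _ _)
  have hε'r : ε' ≤ r := le_trans (min_le_right _ _) (min_le_right _ _)
  -- no roots outside the balls, via compactness
  set Y : Set ℝ := Icc (-B) B \ ⋃ j : Fin m, Ioo (y j - ε') (y j + ε') with hYdef
  have hYc : IsCompact Y := isCompact_Icc.diff (isOpen_iUnion fun j => isOpen_Ioo)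
  obtain ⟨δY, hδY, hYav⟩ := avoid_zeros (continuous_evalAtR f) hYc x₀ (by
    rintro z ⟨hz1, hz2⟩ h0
    have hz : z ∈ R₀ := by
      rw [hR₀, Multiset.mem_toFinset, mem_roots hp0]
      exact h0
    have : z ∈ Set.range (R₀.orderEmbOfFin hm) := by
      rw [Finset.range_orderEmbOfFin]
      exact_mod_cast hz
    obtain ⟨j, hj⟩ := this
    exact hz2 (Set.mem_iUnion.2 ⟨j, by rw [← hj]; constructor <;> [linarith [hε'pos]; linarith [hε'pos]]⟩))
  -- sign-change points
  have hsign : ∀ j : Fin m, ∃ u v : ℝ, u ∈ Ioo (y j - ε') (y j) ∧ v ∈ Ioo (y j) (y j + ε')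
      ∧ p.eval u * p.eval v < 0 :=
    fun j => sign_change p (y j) (hyroot j) (hydp j) ε' hε'pos
  choose u v hu hv hsgn using hsign
  -- persistence of the sign change
  obtain ⟨δs, hδs, hpers⟩ : ∃ δs > 0, ∀ j : Fin m, ∀ x : ℝ, |x - x₀| < δs →
      (fiberR f x).eval (u j) * (fiberR f x).eval (v j) < 0 := by
    have h1 : ∀ j : Fin m, ∃ δs > 0, ∀ x : ℝ, |x - x₀| < δs →
        (fiberR f x).eval (u j) * (fiberR f x).eval (v j) < 0 := by
      intro j
      have hG : Continuous fun x : ℝ => (fiberR f x).eval (u j) * (fiberR f x).eval (v j) := by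
        have h2 : Continuous fun x : ℝ => evalAtR x (u j) f :=
          (continuous_evalAtR f).comp (continuous_id.prodMk continuous_const)
        have h3 : Continuous fun x : ℝ => evalAtR x (v j) f :=
          (continuous_evalAtR f).comp (continuous_id.prodMk continuous_const)
        exact h2.mul h3
      have hc := hG.continuousAt (x := x₀)
      rw [Metric.continuousAt_iff] at hc
      obtain ⟨δ, hδ, hδp⟩ := hc (-(p.eval (u j) * p.eval (v j))) (by linarith [hsgn j])
      refine ⟨δ, hδ, fun x hx => ?_⟩
      have := hδp (by rwa [Real.dist_eq])
      rw [Real.dist_eq] at this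
      have := (abs_sub_lt_iff.1 this).1
      simp only [hp] at this ⊢
      linarith
    exact fin_choice_pos h1 (fun j r r' hr' hle hP x h1 => hP x (lt_of_lt_of_le h1 hle))
  -- radius inside I
  obtain ⟨δI, hδI, hIball⟩ := Metric.isOpen_iff.1 hIopen x₀ hx₀
  -- final δ
  refine ⟨min δI (min δB (min δY (min r δs))), by positivity, fun x hx => ?_⟩
  have hxI : x ∈ I := hIball (by
    rw [Metric.mem_ball, Real.dist_eq]
    exact lt_of_lt_of_le hx (min_le_left _ _))
  have hxB : |x - x₀| < δB := lt_of_lt_of_le hx (le_trans (min_le_right _ _) (min_le_left _ _))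
  have hxY : |x - x₀| < δY := lt_of_lt_of_le hx
    (le_trans (min_le_right _ _) (le_trans (min_le_right _ _) (min_le_left _ _)))
  have hxr : |x - x₀| < r := lt_of_lt_of_le hx
    (le_trans (min_le_right _ _) (le_trans (min_le_right _ _)
      (le_trans (min_le_right _ _) (min_le_left _ _))))
  have hxs : |x - x₀| < δs := lt_of_lt_of_le hx
    (le_trans (min_le_right _ _) (le_trans (min_le_right _ _)
      (le_trans (min_le_right _ _) (min_le_right _ _))))
  refine ⟨hxI, ?_⟩
  have hq0 : fiberR f x ≠ 0 := fiber_ne_zero (hlc x hxI)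
  set q := fiberR f x with hq
  -- Claim A : every root of q is within ε' of some y j
  have claimA : ∀ z : ℝ, q.eval z = 0 → ∃ j, |z - y j| < ε' := by
    intro z hz
    by_contra hno
    push_neg at hno
    have hzB : |z| < B := by
      by_contra h
      exact hbound x hxB z (not_lt.1 h) hz
    have hzY : z ∈ Y := by
      constructor
      · rcases abs_lt.1 hzB with ⟨h1, h2⟩
        exact ⟨le_of_lt h1, le_of_lt h2⟩
      · intro hmem
        obtain ⟨s, ⟨j, rfl⟩, hjm⟩ := hmem
        rcases hjm with ⟨h1, h2⟩
        have : |z - y j| < ε' := abs_lt.2 ⟨by linarith, by linarith⟩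
        exact absurd this (not_lt.2 (hno j))
    exact hYav x hxY z hzY hz
  -- Claim C : uniqueness of the root near y j
  have claimC : ∀ j : Fin m, ∀ z z' : ℝ, q.eval z = 0 → |z - y j| ≤ ε' →
      q.eval z' = 0 → |z' - y j| ≤ ε' → z = z' := by
    intro j z z' hz hzd hz' hzd'
    have hinj := injOn_of_deriv_ne q (y j - ε') (y j + ε') (by
      intro w hw
      rw [hq, fiber_derivative]
      apply hder j x w hxr
      rcases hw with ⟨h1, h2⟩
      rw [abs_le]
      constructor <;> [linarith [hε'r]; linarith [hε'r]])
    have hzm : z ∈ Icc (y j - ε') (y j + ε') := by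
      rcases abs_le.1 hzd with ⟨h1, h2⟩
      exact ⟨by linarith, by linarith⟩
    have hzm' : z' ∈ Icc (y j - ε') (y j + ε') := by
      rcases abs_le.1 hzd' with ⟨h1, h2⟩
      exact ⟨by linarith, by linarith⟩
    exact hinj hzm hzm' (by simp only [hz, hz'])
  -- Claim B : existence of a root near each y j
  have claimB : ∀ j : Fin m, ∃ z : ℝ, q.eval z = 0 ∧ |z - y j| < ε' := by
    intro j
    have hpr := hpers j x hxs
    have huv : u j < v j := lt_trans (hu j).2 (hv j).1
    have hcont : ContinuousOn (fun w => q.eval w) (Icc (u j) (v j)) := q.continuous.continuousOn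
    rcases mul_neg_iff.1 hpr with ⟨h1, h2⟩ | ⟨h1, h2⟩
    · -- q(u) > 0 > q(v)
      have h0 : (0:ℝ) ∈ Ioo (q.eval (v j)) (q.eval (u j)) := ⟨h2, h1⟩
      have := intermediate_value_Ioo' (le_of_lt huv) hcont h0
      obtain ⟨z, hzI, hz0⟩ := this
      exact ⟨z, hz0, abs_lt.2 ⟨by linarith [(hu j).1, hzI.1], by linarith [(hv j).2, hzI.2]⟩⟩
    · have h0 : (0:ℝ) ∈ Ioo (q.eval (u j)) (q.eval (v j)) := ⟨h1, h2⟩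
      have := intermediate_value_Ioo (le_of_lt huv) hcont h0
      obtain ⟨z, hzI, hz0⟩ := this
      exact ⟨z, hz0, abs_lt.2 ⟨by linarith [(hu j).1, hzI.1], by linarith [(hv j).2, hzI.2]⟩⟩
  choose c hcroot hcdist using claimB
  -- c is strictly monotone
  have hcmono : StrictMono c := by
    intro j j' hjj'
    have h1 := hgap j j' hjj'
    rcases abs_lt.1 (hcdist j) with ⟨a1, a2⟩
    rcases abs_lt.1 (hcdist j') with ⟨b1, b2⟩
    have : 2 * ε' ≤ y j' - y j := by linarith [hε'g]
    linarith
  -- all roots of q are exactly the c j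
  have hcmem : ∀ j, c j ∈ q.roots.toFinset := by
    intro j
    rw [Multiset.mem_toFinset, mem_roots hq0]
    exact hcroot j
  have hrootsurj : ∀ z ∈ q.roots.toFinset, ∃ j, c j = z := by
    intro z hz
    rw [Multiset.mem_toFinset, mem_roots hq0] at hz
    obtain ⟨j, hj⟩ := claimA z hz
    exact ⟨j, (claimC j z (c j) hz (le_of_lt hj) (hcroot j) (le_of_lt (hcdist j))).symm⟩
  have himage : q.roots.toFinset = Finset.image c Finset.univ := by
    apply Finset.ext
    intro z
    constructor
    · intro hz
      obtain ⟨j, hj⟩ := hrootsurj z hz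
      exact Finset.mem_image.2 ⟨j, Finset.mem_univ _, hj⟩
    · intro hz
      obtain ⟨j, _, hj⟩ := Finset.mem_image.1 hz
      rw [← hj]
      exact hcmem j
  have hcard : q.roots.toFinset.card = m := by
    rw [himage, Finset.card_image_of_injective _ hcmono.injective, Finset.card_univ,
      Fintype.card_fin]
  refine ⟨hcard, fun j => ?_⟩
  have hcu := Finset.orderEmbOfFin_unique hcard (f := c) hcmem hcmono
  have : (q.roots.toFinset.orderEmbOfFin hcard) j = c j := by rw [← hcu]
  rw [this]
  exact lt_of_lt_of_le (hcdist j) hε'ε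


/-- **Delineability.**  Let `f ∈ ℝ[x,y]` and let `I ⊂ ℝ` be an open interval such that
(i) the leading coefficient of `f` with respect to `y` does not vanish on `I`, and
(ii) no `x`-critical point of `V(f)` lies above `I`.  Then `f` is delineable over `I`:
there are `m ≥ 0` continuous functions `φ_1 < … < φ_m : I → ℝ` whose graphs form exactly
the real zero set of `f` over `I`; in particular, for every `x ∈ I` the polynomial
`f(x,·)` has exactly `m` distinct real roots. -/
theorem delineable (f : RXY) (I : Set ℝ) (hIopen : IsOpen I) (hIconn : I.OrdConnected)
    (hlc : ∀ x ∈ I, f.leadingCoeff.eval x ≠ 0)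
    (hcrit : ∀ x ∈ I, ∀ y : ℝ, evalAtR x y f = 0 → evalAtR x y (derivative f) ≠ 0) :
    ∃ (m : ℕ) (φ : Fin m → ℝ → ℝ),
      (∀ j, ContinuousOn (φ j) I) ∧
      (∀ x ∈ I, ∀ j k : Fin m, j < k → φ j x < φ k x) ∧
      (∀ x ∈ I, ∀ y : ℝ, evalAtR x y f = 0 ↔ ∃ j, φ j x = y) ∧
      (∀ x ∈ I, (fiberR f x).roots.toFinset.card = m) := by
  rcases I.eq_empty_or_nonempty with rfl | ⟨x₀, hx₀⟩
  · exact ⟨0, fun j _ => 0, fun j => j.elim0, fun x hx => absurd hx (notMem_empty x),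
      fun x hx => absurd hx (notMem_empty x), fun x hx => absurd hx (notMem_empty x)⟩
  set m := (fiberR f x₀).roots.toFinset.card with hmdef
  -- the number of roots is locally constant, hence constant on I
  have hconst : ∀ x ∈ I, (fiberR f x).roots.toFinset.card = m := by
    set A := {x : ℝ | x ∈ I ∧ (fiberR f x).roots.toFinset.card = m} with hA
    set B := {x : ℝ | x ∈ I ∧ (fiberR f x).roots.toFinset.card ≠ m} with hB
    have hAopen : IsOpen A := by
      rw [Metric.isOpen_iff]
      rintro x ⟨hxI, hxm⟩
      obtain ⟨δ, hδ, hprop⟩ := key f I hIopen hlc hcrit x hxI _ rfl 1 one_pos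
      refine ⟨δ, hδ, fun x' hx' => ?_⟩
      rw [Metric.mem_ball, Real.dist_eq] at hx'
      obtain ⟨hx'I, hcard, -⟩ := hprop x' hx'
      exact ⟨hx'I, by rw [hcard, hxm]⟩
    have hBopen : IsOpen B := by
      rw [Metric.isOpen_iff]
      rintro x ⟨hxI, hxm⟩
      obtain ⟨δ, hδ, hprop⟩ := key f I hIopen hlc hcrit x hxI _ rfl 1 one_pos
      refine ⟨δ, hδ, fun x' hx' => ?_⟩
      rw [Metric.mem_ball, Real.dist_eq] at hx'
      obtain ⟨hx'I, hcard, -⟩ := hprop x' hx'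
      exact ⟨hx'I, by rw [hcard]; exact hxm⟩
    have hdisj : Disjoint A B := by
      rw [Set.disjoint_left]
      rintro x ⟨_, h1⟩ ⟨_, h2⟩
      exact h2 h1
    have hsub : I ⊆ A ∪ B := by
      intro x hx
      by_cases h : (fiberR f x).roots.toFinset.card = m
      · exact Or.inl ⟨hx, h⟩
      · exact Or.inr ⟨hx, h⟩
    have hpre : IsPreconnected I := isPreconnected_iff_ordConnected.2 hIconn
    have hIA : I ⊆ A :=
      hpre.subset_left_of_subset_union hAopen hBopen hdisj hsub ⟨x₀, hx₀, hx₀, rfl⟩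
    exact fun x hx => (hIA hx).2
  -- define the root functions
  set φ : Fin m → ℝ → ℝ := fun j x =>
    if h : (fiberR f x).roots.toFinset.card = m
    then (fiberR f x).roots.toFinset.orderEmbOfFin h j else 0 with hφ
  refine ⟨m, φ, ?_, ?_, ?_, hconst⟩
  · -- continuity
    intro j
    intro x hx
    apply ContinuousAt.continuousWithinAt
    rw [Metric.continuousAt_iff]
    intro ε hε
    obtain ⟨δ, hδ, hprop⟩ := key f I hIopen hlc hcrit x hx _ (hconst x hx) ε hε
    refine ⟨δ, hδ, fun x' hx' => ?_⟩
    rw [Real.dist_eq] at hx'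
    obtain ⟨hx'I, hcard, hclose⟩ := hprop x' hx'
    rw [Real.dist_eq]
    have e1 : φ j x' = (fiberR f x').roots.toFinset.orderEmbOfFin hcard j := by
      simp only [hφ]
      rw [dif_pos hcard]
    have e2 : φ j x = (fiberR f x).roots.toFinset.orderEmbOfFin (hconst x hx) j := by
      simp only [hφ]
      rw [dif_pos (hconst x hx)]
    rw [e1, e2]
    exact hclose j
  · -- strict ordering
    intro x hx j k hjk
    have e : ∀ i : Fin m, φ i x = (fiberR f x).roots.toFinset.orderEmbOfFin (hconst x hx) i := by
      intro i
      simp only [hφ]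
      rw [dif_pos (hconst x hx)]
    rw [e j, e k]
    exact ((fiberR f x).roots.toFinset.orderEmbOfFin (hconst x hx)).strictMono hjk
  · -- the zero set
    intro x hx y
    have hq0 : fiberR f x ≠ 0 := fiber_ne_zero (hlc x hx)
    have e : ∀ i : Fin m, φ i x = (fiberR f x).roots.toFinset.orderEmbOfFin (hconst x hx) i := by
      intro i
      simp only [hφ]
      rw [dif_pos (hconst x hx)]
    constructor
    · intro h0
      have hy : y ∈ (fiberR f x).roots.toFinset := by
        rw [Multiset.mem_toFinset, mem_roots hq0]
        exact h0
      have : y ∈ Set.range ((fiberR f x).roots.toFinset.orderEmbOfFin (hconst x hx)) := by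
        rw [Finset.range_orderEmbOfFin]
        exact_mod_cast hy
      obtain ⟨j, hj⟩ := this
      exact ⟨j, by rw [e j, hj]⟩
    · rintro ⟨j, hj⟩
      rw [e j] at hj
      have := Finset.orderEmbOfFin_mem (fiberR f x).roots.toFinset (hconst x hx) j
      rw [hj, Multiset.mem_toFinset, mem_roots hq0] at this
      exact this
end
end
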